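/- For every irrational real r with a continued fraction expansion r = n₀ + 1/(n₁ + 1/(n₂ + ⋯)) (n₀ ≥ 0, n_i ≥ 1 for i ≥ 1), the sequence a(N_m) converges to r, where N_m = Σ_{k=0}^{m} 2^{n₀+n₁+⋯+n_k} is the truncation of the associated 2-adic index. -/

import Mathlib

/-- Value of the finite continued fraction x₀ + 1/(x₁ + 1/(⋯ + 1/x_k⋯)) over ℝ. -/
noncomputable def cfR : List ℕ → ℝ
  | [] => 0
  | [x] => (x : ℝ)
  | x :: l => (x : ℝ) + 1 / cfR l

/-!
Since `N_m = 2^{n₀} (1 + 2^{n₁} (1 + ⋯ (1 + 2^{n_m})))`, the recursion turns each factor `2^{n_i}`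
into `n_i + ·` and each `1 + ·` into an inversion, so `a(N_m) = [n₀; n₁, …, n_{m-1}, n_m + 1]`.
A continued fraction depends monotonically on its tail, so this value lies between the
convergents `[n₀; …, n_{m-1}]` and `[n₀; …, n_{m+1}]`, which both tend to `r`.
-/

open Filter Set

section TwoAdic

def twoAdicTrunc (n : ℕ → ℕ) (m : ℕ) : ℕ :=
  ∑ k ∈ Finset.range (m + 1), 2 ^ ∑ i ∈ Finset.range (k + 1), n i

variable (n : ℕ → ℕ)

lemma twoAdicTrunc_zero : twoAdicTrunc n 0 = 2 ^ n 0 := by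
  simp [twoAdicTrunc]

lemma twoAdicTrunc_succ (m : ℕ) :
    twoAdicTrunc n (m + 1) = 2 ^ n 0 * (twoAdicTrunc (fun i => n (i + 1)) m + 1) := by
  simp only [twoAdicTrunc, Finset.sum_range_succ' _ (m + 1), Finset.sum_range_succ' n,
    pow_add, ← Finset.sum_mul]
  ring

lemma twoAdicTrunc_pos (m : ℕ) : 0 < twoAdicTrunc n m := by
  unfold twoAdicTrunc; positivity

lemma two_pow_dvd_twoAdicTrunc (m : ℕ) : 2 ^ n 0 ∣ twoAdicTrunc n m := by
  cases m with
  | zero => simp [twoAdicTrunc_zero]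
  | succ m => simp [twoAdicTrunc_succ]

end TwoAdic

def cfTail {K : Type*} [DivisionRing K] (l : List ℕ) (x : K) : K :=
  l.foldr (fun (h : ℕ) (y : K) => (h : K) + 1 / y) x

@[simp] lemma cfTail_nil {K : Type*} [DivisionRing K] (x : K) : cfTail [] x = x := rfl

@[simp] lemma cfTail_cons {K : Type*} [DivisionRing K] (h : ℕ) (l : List ℕ) (x : K) :
    cfTail (h :: l) x = h + 1 / cfTail l x := rfl

lemma cfTail_append {K : Type*} [DivisionRing K] (l l' : List ℕ) (x : K) :
    cfTail (l ++ l') x = cfTail l (cfTail l' x) :=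
  List.foldr_append

section Recursion

variable {K : Type*} [DivisionRing K] {a : ℕ → K}

lemma apply_two_pow_mul (h2 : ∀ n, 1 ≤ n → a (2 * n) = a n + 1) (i : ℕ) {M : ℕ} (hM : 1 ≤ M) :
    a (2 ^ i * M) = a M + i := by
  induction i with
  | zero => simp
  | succ i ih =>
    rw [pow_succ', mul_assoc, h2 _ (Nat.one_le_iff_ne_zero.2 (by positivity)), ih]
    push_cast
    rw [add_assoc]

lemma apply_succ_of_even (h3 : ∀ n, 1 ≤ n → a (2 * n + 1) = 1 / a (2 * n)) {M : ℕ}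
    (hM : Even M) (hM0 : 0 < M) : a (M + 1) = 1 / a M := by
  obtain ⟨k, rfl⟩ := hM
  rw [← two_mul] at hM0 ⊢
  exact h3 k (by omega)

theorem apply_twoAdicTrunc (h1 : a 1 = 1) (h2 : ∀ n, 1 ≤ n → a (2 * n) = a n + 1)
    (h3 : ∀ n, 1 ≤ n → a (2 * n + 1) = 1 / a (2 * n)) (m : ℕ) {n : ℕ → ℕ}
    (hn : ∀ i, 1 ≤ i → 1 ≤ n i) : a (twoAdicTrunc n m) = cfTail ((List.range (m + 1)).map n) 1 := by
  induction m generalizing n with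
  | zero =>
    rw [twoAdicTrunc_zero, ← mul_one (2 ^ n 0), apply_two_pow_mul h2 _ le_rfl, h1]
    simp [add_comm]
  | succ m ih =>
    set n' : ℕ → ℕ := fun i => n (i + 1)
    have hn' : ∀ i, 1 ≤ i → 1 ≤ n' i := fun i _ => hn (i + 1) (by omega)
    have heven : Even (twoAdicTrunc n' m) :=
      (even_two.pow_of_ne_zero (Nat.one_le_iff_ne_zero.1 (hn 1 le_rfl))).trans_dvd
        (two_pow_dvd_twoAdicTrunc n' m)
    rw [twoAdicTrunc_succ, apply_two_pow_mul h2 _ (by omega),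
      apply_succ_of_even h3 heven (twoAdicTrunc_pos n' m), ih hn',
      List.range_succ_eq_map (n := m + 1), List.map_cons, List.map_map, cfTail_cons, add_comm]
    rfl

end Recursion

section Order

variable {K : Type*} [Field K] [LinearOrder K] [IsStrictOrderedRing K]

lemma cfTail_pos (l : List ℕ) {x : K} (hx : 0 < x) : 0 < cfTail l x := by
  induction l with
  | nil => exact hx
  | cons h l ih => rw [cfTail_cons]; positivity

lemma natCast_add_one_div_mem_uIcc (h : ℕ) {u v w : K} (hu : 0 < u) (hw : 0 < w)
    (hv : v ∈ uIcc u w) : (h : K) + 1 / v ∈ uIcc ((h : K) + 1 / u) ((h : K) + 1 / w) := by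
  rw [mem_uIcc] at hv ⊢
  rcases hv with ⟨huv, hvw⟩ | ⟨hwv, hvu⟩
  · have hv : 0 < v := hu.trans_le huv
    exact Or.inr ⟨by gcongr, by gcongr⟩
  · have hv : 0 < v := hw.trans_le hwv
    exact Or.inl ⟨by gcongr, by gcongr⟩

lemma cfTail_mem_uIcc (l : List ℕ) {x y z : K} (hx : 0 < x) (hz : 0 < z) (hy : y ∈ uIcc x z) :
    cfTail l y ∈ uIcc (cfTail l x) (cfTail l z) := by
  induction l with
  | nil => exact hy
  | cons h l ih => exact natCast_add_one_div_mem_uIcc h (cfTail_pos l hx) (cfTail_pos l hz) ih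

end Order

lemma cfR_append_singleton (l : List ℕ) (k : ℕ) : cfR (l ++ [k]) = cfTail l (k : ℝ) := by
  induction l with
  | nil => rfl
  | cons h t ih =>
    cases t with
    | nil => simp [cfR]
    | cons y u =>
      change (h : ℝ) + 1 / cfR (y :: u ++ [k]) = _
      rw [ih]; rfl

lemma cfTail_one_mem_uIcc_cfR (l : List ℕ) {e f g : ℕ} (he : 1 ≤ e) (hg : 1 ≤ g) :
    cfTail (l ++ [e] ++ [f]) (1 : ℝ) ∈ uIcc (cfR (l ++ [e])) (cfR (l ++ [e] ++ [f] ++ [g])) := by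
  have he' : (1 : ℝ) ≤ e := by exact_mod_cast he
  have hg' : (1 : ℝ) ≤ g := by exact_mod_cast hg
  simp only [cfR_append_singleton, cfTail_append, cfTail_cons, cfTail_nil, div_one]
  refine cfTail_mem_uIcc l (by positivity) (by positivity) (mem_uIcc.2 (Or.inl ⟨?_, ?_⟩))
  · exact le_add_of_nonneg_right (by positivity)
  · gcongr
    exact div_le_one_of_le₀ hg' (by positivity)

lemma tendsto_of_mem_uIcc {α β : Type*} [TopologicalSpace α] [LinearOrder α] [OrderTopology α]
    {l : Filter β} {f g h : β → α} {x : α} (hf : Tendsto f l (nhds x)) (hg : Tendsto g l (nhds x))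
    (hh : ∀ b, h b ∈ uIcc (f b) (g b)) : Tendsto h l (nhds x) :=
  tendsto_of_tendsto_of_tendsto_of_le_of_le (by simpa using hf.min hg)
    (by simpa using hf.max hg) (fun b => (hh b).1) (fun b => (hh b).2)

theorem stmt19_general (a : ℕ → ℚ) (h1 : a 1 = 1)
    (h2 : ∀ n : ℕ, 1 ≤ n → a (2 * n) = a n + 1)
    (h3 : ∀ n : ℕ, 1 ≤ n → a (2 * n + 1) = 1 / a (2 * n))
    (n : ℕ → ℕ) (hn : ∀ i : ℕ, 1 ≤ i → 1 ≤ n i)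
    (r : ℝ)
    (hconv : Filter.Tendsto (fun m : ℕ => cfR ((List.range (m + 1)).map n))
      Filter.atTop (nhds r))
    (N : ℕ → ℕ)
    (hN : ∀ m : ℕ, N m = ∑ k ∈ Finset.range (m + 1), 2 ^ (∑ i ∈ Finset.range (k + 1), n i)) :
    Filter.Tendsto (fun m : ℕ => ((a (N m) : ℚ) : ℝ)) Filter.atTop (nhds r) := by
  have hval (m : ℕ) : ((a (N m) : ℚ) : ℝ) = cfTail ((List.range (m + 1)).map n) 1 :=
    (hN m).symm ▸ apply_twoAdicTrunc (a := fun k => (a k : ℝ)) (by simp [h1])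
      (fun k hk => by simp [h2 k hk]) (fun k hk => by simp [h3 k hk]) m hn
  rw [← tendsto_add_atTop_iff_nat 2]
  refine tendsto_of_mem_uIcc ((tendsto_add_atTop_iff_nat 1).2 hconv)
    ((tendsto_add_atTop_iff_nat 3).2 hconv) fun k => ?_
  have hsplit (m : ℕ) : (List.range (m + 1)).map n = (List.range m).map n ++ [n m] := by
    simp [List.range_succ]
  simp only [hval, hsplit]
  exact cfTail_one_mem_uIcc_cfR _ (hn (k + 1) (by omega)) (hn (k + 3) (by omega))

theorem stmt19 (a : ℕ → ℚ) (h1 : a 1 = 1)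
    (h2 : ∀ n : ℕ, 1 ≤ n → a (2 * n) = a n + 1)
    (h3 : ∀ n : ℕ, 1 ≤ n → a (2 * n + 1) = 1 / a (2 * n))
    (n : ℕ → ℕ) (hn : ∀ i : ℕ, 1 ≤ i → 1 ≤ n i)
    (r : ℝ) (hr : Irrational r)
    (hconv : Filter.Tendsto (fun m : ℕ => cfR ((List.range (m + 1)).map n))
      Filter.atTop (nhds r))
    (N : ℕ → ℕ)
    (hN : ∀ m : ℕ, N m = ∑ k ∈ Finset.range (m + 1), 2 ^ (∑ i ∈ Finset.range (k + 1), n i)) :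
    Filter.Tendsto (fun m : ℕ => ((a (N m) : ℚ) : ℝ)) Filter.atTop (nhds r) :=
  stmt19_general a h1 h2 h3 n hn r hconv N hN
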